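/- Let θ ∈ (0, π/2), s² = 1 − cos θ, h = √(cos θ), and let E₁ = (s,s,0), M₂ = (0,s,h), E₂ = (−s,s,0). Suppose Ẽ₁ = E₁ + (−p,−p,q) and Ẽ₂ = E₂ + (p,−p,q) for some p > 0 and q > 2h. Then (Ẽ₁ − M₂)·(Ẽ₂ − M₂) > (E₁ − M₂)·(E₂ − M₂). Consequently, if additionally |Ẽ₁ − M₂| = |Ẽ₂ − M₂| = 1, the angle ∠Ẽ₁ M₂ Ẽ₂ is strictly smaller than ∠E₁ M₂ E₂. -/

import Mathlib

set_option maxHeartbeats 1000000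


open Real EuclideanGeometry

/-- The vector `(a, b, c)` in `ℝ³` with the Euclidean inner product. -/
def vec3 (a b c : ℝ) : EuclideanSpace ℝ (Fin 3) := WithLp.toLp 2 ![a, b, c]


lemma vec3_inner (a b c d e f : ℝ) :
    (inner ℝ (vec3 a b c) (vec3 d e f) : ℝ) = a*d + b*e + c*f := by
  simp [vec3, PiLp.inner_apply, Fin.sum_univ_three]; ring

lemma vec3_sub (a b c d e f : ℝ) :
    vec3 a b c - vec3 d e f = vec3 (a-d) (b-e) (c-f) := by
  ext i; fin_cases i <;> simp [vec3]

lemma vec3_add (a b c d e f : ℝ) :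
    vec3 a b c + vec3 d e f = vec3 (a+d) (b+e) (c+f) := by
  ext i; fin_cases i <;> simp [vec3]

/-- The E-boundary angle is strictly smaller than the Z-boundary angle: moving
the corner points `E₁, E₂` by `(−p,−p,q)` and `(p,−p,q)` with `p > 0`, `q > 2h`
strictly increases the inner product, hence (for unit distances) strictly
decreases the angle at `M₂`. -/
theorem stmt_11 (θ s h p q : ℝ) (hθ : θ ∈ Set.Ioo 0 (π / 2))
    (hs : s ^ 2 = 1 - Real.cos θ) (hspos : 0 < s)
    (hh : h = Real.sqrt (Real.cos θ))
    (hp : 0 < p) (hq : q > 2 * h)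
    (E₁ M₂ E₂ F₁ F₂ : EuclideanSpace ℝ (Fin 3))
    (hE1 : E₁ = vec3 s s 0) (hM2 : M₂ = vec3 0 s h) (hE2 : E₂ = vec3 (-s) s 0)
    (hF1 : F₁ = E₁ + vec3 (-p) (-p) q) (hF2 : F₂ = E₂ + vec3 p (-p) q) :
    (inner ℝ (F₁ - M₂) (F₂ - M₂) : ℝ) > (inner ℝ (E₁ - M₂) (E₂ - M₂) : ℝ) ∧
    (dist F₁ M₂ = 1 → dist F₂ M₂ = 1 → ∠ F₁ M₂ F₂ < ∠ E₁ M₂ E₂) := by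
  have hcos : 0 < Real.cos θ := Real.cos_pos_of_mem_Ioo
    ⟨by linarith [hθ.1, Real.pi_pos], hθ.2⟩
  have hh2 : h ^ 2 = Real.cos θ := by
    rw [hh, sq, Real.mul_self_sqrt hcos.le]
  have hhpos : 0 < h := by
    rw [hh]; exact Real.sqrt_pos.mpr hcos
  have hIE : (inner ℝ (E₁ - M₂) (E₂ - M₂) : ℝ) = -s^2 + h^2 := by
    rw [hE1, hM2, hE2, vec3_sub, vec3_sub, vec3_inner]; ring
  have hIF : (inner ℝ (F₁ - M₂) (F₂ - M₂) : ℝ) = -s^2 + h^2 + 2*p*s + q^2 - 2*q*h := by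
    rw [hF1, hF2, hE1, hM2, hE2, vec3_add, vec3_add, vec3_sub, vec3_sub, vec3_inner]; ring
  have hgt : (inner ℝ (F₁ - M₂) (F₂ - M₂) : ℝ) > (inner ℝ (E₁ - M₂) (E₂ - M₂) : ℝ) := by
    rw [hIE, hIF]
    nlinarith [hhpos, hp, hspos, hq]
  refine ⟨hgt, fun hd1 hd2 => ?_⟩
  -- norms
  have hnF1 : ‖F₁ - M₂‖ = 1 := by
    rw [← hd1]; simp [dist_eq_norm]
  have hnF2 : ‖F₂ - M₂‖ = 1 := by
    rw [← hd2]; simp [dist_eq_norm]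
  have hnE1 : ‖E₁ - M₂‖ = 1 := by
    have : ‖E₁ - M₂‖ ^ 2 = 1 := by
      rw [← real_inner_self_eq_norm_sq]
      rw [hE1, hM2, vec3_sub, vec3_inner]; nlinarith [hh2, hs]
    nlinarith [norm_nonneg (E₁ - M₂)]
  have hnE2 : ‖E₂ - M₂‖ = 1 := by
    have : ‖E₂ - M₂‖ ^ 2 = 1 := by
      rw [← real_inner_self_eq_norm_sq]
      rw [hE2, hM2, vec3_sub, vec3_inner]; nlinarith [hh2, hs]
    nlinarith [norm_nonneg (E₂ - M₂)]
  have hangF : ∠ F₁ M₂ F₂ = Real.arccos (inner ℝ (F₁ - M₂) (F₂ - M₂) : ℝ) := by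
    rw [EuclideanGeometry.angle, InnerProductGeometry.angle]
    simp [hnF1, hnF2]
  have hangE : ∠ E₁ M₂ E₂ = Real.arccos (inner ℝ (E₁ - M₂) (E₂ - M₂) : ℝ) := by
    rw [EuclideanGeometry.angle, InnerProductGeometry.angle]
    simp [hnE1, hnE2]
  rw [hangF, hangE]
  have hle1 : (inner ℝ (F₁ - M₂) (F₂ - M₂) : ℝ) ≤ 1 := by
    have := real_inner_le_norm (F₁ - M₂) (F₂ - M₂)
    rwa [hnF1, hnF2, one_mul] at this
  have hge1 : (-1 : ℝ) ≤ (inner ℝ (E₁ - M₂) (E₂ - M₂) : ℝ) := by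
    have := abs_real_inner_le_norm (E₁ - M₂) (E₂ - M₂)
    rw [hnE1, hnE2, one_mul] at this
    linarith [neg_abs_le (inner ℝ (E₁ - M₂) (E₂ - M₂) : ℝ)]
  have hgeF : (-1 : ℝ) ≤ (inner ℝ (F₁ - M₂) (F₂ - M₂) : ℝ) := le_trans hge1 hgt.le
  have hleE : (inner ℝ (E₁ - M₂) (E₂ - M₂) : ℝ) ≤ 1 := le_trans hgt.le hle1
  exact Real.strictAntiOn_arccos ⟨hge1, hleE⟩ ⟨hgeF, hle1⟩ hgt
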